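/- Let B be a right double extension of A with data (P, σ, δ, τ), and suppose there is a k-algebra homomorphism ε : A → k with kernel m such that σᵢⱼ(m) ⊆ m for all i, j ∈ {1,2}, δᵢ(m) ⊆ m for i = 1, 2, and τ₁, τ₂, τ₀ ∈ m. If B is left noetherian or right noetherian, then p₁₂ ≠ 0. (The key point is that k⟨Y₁, Y₂⟩/((Y₂ − p₁₁Y₁)Y₁) is neither left nor right noetherian.) -/

import Mathlib

structure RightDoubleExtension (k : Type*) [Field k] {B : Type*} [Ring B] [Algebra k B]
    (A : Subalgebra k B) where
  y₁ : B
  y₂ : B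
  σ₁₁ : A →ₗ[k] A
  σ₁₂ : A →ₗ[k] A
  σ₂₁ : A →ₗ[k] A
  σ₂₂ : A →ₗ[k] A
  δ₁ : A →ₗ[k] A
  δ₂ : A →ₗ[k] A
  p₁₂ : k
  p₁₁ : k
  τ₁ : A
  τ₂ : A
  τ₀ : A
  R1 : y₂ * y₁ = p₁₂ • (y₁ * y₂) + p₁₁ • (y₁ * y₁)
      + (τ₁ : B) * y₁ + (τ₂ : B) * y₂ + (τ₀ : B)
  R2₁ : ∀ r : A, y₁ * (r : B) = (σ₁₁ r : B) * y₁ + (σ₁₂ r : B) * y₂ + (δ₁ r : B)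
  R2₂ : ∀ r : A, y₂ * (r : B) = (σ₂₁ r : B) * y₁ + (σ₂₂ r : B) * y₂ + (δ₂ r : B)
  basis : ∀ b : B, ∃! f : ℕ × ℕ →₀ A,
      b = f.sum fun n a => (a : B) * (y₁ ^ n.1 * y₂ ^ n.2)

/-!
If `p₁₂ = 0`, the ideal `mB` is two-sided (this is where the `σ`- and `δ`-stability of `m` enters)
and `B / mB` has the `k`-basis `ȳ₁ᵃ ȳ₂ᵇ` subject to `ȳ₂ ȳ₁ = p₁₁ ȳ₁²` (the tail `τ` dies in
`B / mB`); that is, `B / mB ≅ k⟨Y₁, Y₂⟩ / ((Y₂ - p₁₁ Y₁) Y₁)`. In this algebra the left ideals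
generated by `Y₁ Y₂ʲ, j ≤ n` and the right ideals generated by `Y₁ʲ (Y₂ - p₁₁ Y₁), j ≤ n` form
strictly increasing chains, as one reads off from coordinates in the monomial basis. So `B / mB`,
and hence `B`, is neither left nor right noetherian.
-/

open Module Submodule Set MulOpposite

theorem not_isNoetherian_of_notMem_span {R M : Type*} [Semiring R] [AddCommMonoid M]
    [Module R M] (x : ℕ → M) (hx : ∀ n, x (n + 1) ∉ span R (range fun j : Fin (n + 1) => x j)) :
    ¬IsNoetherian R M := by
  intro hM
  let chain : ℕ →o Submodule R M :=
    ⟨fun n => span R (range fun j : Fin (n + 1) => x j), fun m n hmn =>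
      span_mono <| range_subset_iff.2 fun j => ⟨Fin.castLE (by omega) j, rfl⟩⟩
  obtain ⟨n, hn⟩ := monotone_stabilizes_iff_noetherian.2 hM chain
  have hlast : x (n + 1) ∈ chain (n + 1) := subset_span ⟨Fin.last (n + 1), rfl⟩
  rw [← hn (n + 1) n.le_succ] at hlast
  exact hx n hlast

section

variable {k R : Type*} [CommRing k] [Ring R] [Algebra k R] {u v : R} {p : k}

theorem pow_mul_eq_smul_pow_succ (h : v * u = p • (u * u)) (m : ℕ) :
    v ^ m * u = p ^ m • u ^ (m + 1) := by
  induction m with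
  | zero => simp
  | succ m ih =>
    rw [pow_succ, mul_assoc, h, mul_smul_comm, ← mul_assoc, ih, smul_mul_assoc, smul_smul,
      ← pow_succ, ← pow_succ']

variable (b : Basis (ℕ × ℕ) k R) (hb : ∀ q, b q = u ^ q.1 * v ^ q.2)
include hb

theorem mul_mem_span_pow_succ (h : v * u = p • (u * u)) (r : R) :
    r * u ∈ span k (range fun m : ℕ => u ^ (m + 1)) := by
  suffices span k (range b) ≤ (span k (range fun m : ℕ => u ^ (m + 1))).comap
      (LinearMap.mulRight k u) from this (b.mem_span r)
  rw [span_le]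
  rintro _ ⟨q, rfl⟩
  rw [SetLike.mem_coe, mem_comap, LinearMap.mulRight_apply, hb, mul_assoc,
    pow_mul_eq_smul_pow_succ h, mul_smul_comm, ← pow_add]
  exact smul_mem _ _ (subset_span ⟨q.1 + q.2, by simp only [add_assoc]⟩)

theorem not_isNoetherianRing_of_basis [Nontrivial k] (h : v * u = p • (u * u)) :
    ¬IsNoetherianRing R := by
  refine not_isNoetherian_of_notMem_span (fun n => u * v ^ n) fun n hmem => ?_
  obtain ⟨c, hc⟩ := (mem_span_range_iff_exists_fun R).1 hmem
  have hvanish (r : R) (j : Fin (n + 1)) : b.coord (1, n + 1) (r * u * v ^ (j : ℕ)) = 0 := by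
    suffices span k (range fun m : ℕ => u ^ (m + 1)) ≤
        LinearMap.ker ((b.coord (1, n + 1)).comp (LinearMap.mulRight k (v ^ (j : ℕ)))) from
      this (mul_mem_span_pow_succ b hb h r)
    rw [span_le]
    rintro _ ⟨m, rfl⟩
    simp [← hb (m + 1, j), Finsupp.single_apply]
    omega
  have := congrArg (b.coord (1, n + 1)) hc
  rw [show u * v ^ (n + 1) = b (1, n + 1) by simp [hb]] at this
  simp [smul_eq_mul, ← mul_assoc, hvanish] at this

theorem mul_mem_span_mul_pow {z : R} (hz : z * u = 0) (r : R) :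
    z * r ∈ span k (range fun d : ℕ => z * v ^ d) := by
  suffices span k (range b) ≤ (span k (range fun d : ℕ => z * v ^ d)).comap
      (LinearMap.mulLeft k z) from this (b.mem_span r)
  rw [span_le]
  rintro _ ⟨⟨_ | i, d⟩, rfl⟩
  · exact subset_span ⟨d, by simp [hb]⟩
  · simp [hb, pow_succ', ← mul_assoc, hz]

theorem pow_mul_sub_smul_mul_pow (j d : ℕ) :
    u ^ j * ((v - p • u) * v ^ d) = b (j, d + 1) - p • b (j + 1, d) := by
  rw [hb, hb, pow_succ u, pow_succ' v]
  simp only [mul_sub, sub_mul, smul_mul_assoc, mul_smul_comm, mul_assoc]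

theorem exists_separating_linearMap [Nontrivial k] (n : ℕ) :
    ∃ φ : R →ₗ[k] k, φ (u ^ (n + 1) * (v - p • u)) ≠ 0 ∧
      ∀ j ≤ n, ∀ d, φ (u ^ j * ((v - p • u) * v ^ d)) = 0 := by
  have htarget : u ^ (n + 1) * (v - p • u) = b (n + 1, 1) - p • b (n + 2, 0) := by
    simpa using pow_mul_sub_smul_mul_pow b hb (n + 1) 0
  simp only [htarget, pow_mul_sub_smul_mul_pow b hb]
  by_cases hp : p = 0
  · refine ⟨b.coord (n + 1, 1), by simp [hp], fun j hj d => ?_⟩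
    simp [hp, Finsupp.single_apply]; omega
  · refine ⟨b.coord (n + 2, 0), by simpa [Finsupp.single_apply] using hp, fun j hj d => ?_⟩
    simp [Finsupp.single_apply]; omega

theorem not_isNoetherianRing_mulOpposite_of_basis [Nontrivial k] (h : v * u = p • (u * u)) :
    ¬IsNoetherianRing Rᵐᵒᵖ := by
  refine not_isNoetherian_of_notMem_span (fun n => op (u ^ n * (v - p • u))) fun n hmem => ?_
  obtain ⟨c, hc⟩ := (mem_span_range_iff_exists_fun Rᵐᵒᵖ).1 hmem
  obtain ⟨φ, hφ, hφ_zero⟩ := exists_separating_linearMap b hb n (p := p)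
  have hz : (v - p • u) * u = 0 := by rw [sub_mul, h, smul_mul_assoc, sub_self]
  have hvanish (r : R) (j : Fin (n + 1)) : φ (u ^ (j : ℕ) * ((v - p • u) * r)) = 0 := by
    suffices span k (range fun d : ℕ => (v - p • u) * v ^ d) ≤
        LinearMap.ker (φ.comp (LinearMap.mulLeft k (u ^ (j : ℕ)))) from
      this (mul_mem_span_mul_pow b hb hz r)
    rw [span_le]
    rintro _ ⟨d, rfl⟩
    exact hφ_zero j (by omega) d
  apply hφ
  rw [← unop_op (u ^ (n + 1) * (v - p • u)), ← hc]
  simp [map_sum, mul_assoc, hvanish]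

end

theorem Module.Basis.repr_apply_mem_of_mem_smul_top {ι R M : Type*} [Semiring R]
    [AddCommMonoid M] [Module R M] (b : Basis ι R M) {I : Ideal R} [I.IsTwoSided] {x : M}
    (hx : x ∈ I • (⊤ : Submodule R M)) (i : ι) : b.repr x i ∈ I := by
  refine smul_induction_on hx (fun r hr n _ => ?_) fun x y hx hy => ?_
  · simpa using I.mul_mem_right _ hr
  · simpa using add_mem hx hy

namespace RightDoubleExtension

variable {k : Type*} [Field k] {B : Type*} [Ring B] [Algebra k B] {A : Subalgebra k B}
  (E : RightDoubleExtension k A)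

def monomial (q : ℕ × ℕ) : B := E.y₁ ^ q.1 * E.y₂ ^ q.2

theorem linearIndependent_monomial : LinearIndependent A E.monomial := by
  refine linearIndependent_iff.2 fun l hl => (E.basis 0).unique ?_ (by simp)
  simpa [Finsupp.linearCombination_apply, monomial, Subalgebra.smul_def] using hl.symm

theorem span_monomial : ⊤ ≤ span A (range E.monomial) := fun x _ => by
  obtain ⟨f, hf, -⟩ := E.basis x
  exact Finsupp.mem_span_range_iff_exists_finsupp.2
    ⟨f, by simpa [monomial, Subalgebra.smul_def] using hf.symm⟩

noncomputable def monomialBasis : Basis (ℕ × ℕ) A B :=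
  .mk E.linearIndependent_monomial E.span_monomial

theorem monomialBasis_repr_monomial (q : ℕ × ℕ) :
    E.monomialBasis.repr (E.monomial q) = Finsupp.single q 1 := by
  rw [← E.monomialBasis.repr_self q, monomialBasis, Basis.mk_apply]

section Ideal

variable {I : Ideal A}

theorem mul_mem_smul_top_right {x : B} (hx : x ∈ (I • ⊤ : Submodule A B)) (c : B) :
    x * c ∈ (I • ⊤ : Submodule A B) := by
  refine smul_induction_on hx (fun a ha y _ => ?_) fun x y hx hy => ?_
  · rw [smul_mul_assoc]; exact smul_mem_smul ha mem_top
  · rw [add_mul]; exact add_mem hx hy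

theorem coe_mem_smul_top {a : A} (ha : a ∈ I) : (a : B) ∈ (I • ⊤ : Submodule A B) := by
  simpa [Subalgebra.smul_def] using smul_mem_smul ha (mem_top : (1 : B) ∈ ⊤)

theorem mul_mem_smul_top_of_mul_coe_eq {y : B} {s t d : A → A}
    (hy : ∀ a : A, y * a = (s a : B) * E.y₁ + (t a : B) * E.y₂ + d a)
    (hI : ∀ a ∈ I, s a ∈ I ∧ t a ∈ I ∧ d a ∈ I) {x : B} (hx : x ∈ (I • ⊤ : Submodule A B)) :
    y * x ∈ (I • ⊤ : Submodule A B) := by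
  refine smul_induction_on hx (fun a ha x _ => ?_) fun x x' hx hx' => ?_
  · obtain ⟨hs, ht, hd⟩ := hI a ha
    rw [Subalgebra.smul_def, smul_eq_mul, ← mul_assoc, hy, add_mul, add_mul, mul_assoc,
      mul_assoc]
    exact add_mem (add_mem (mul_mem_smul_top_right (coe_mem_smul_top hs) _)
      (mul_mem_smul_top_right (coe_mem_smul_top ht) _))
      (mul_mem_smul_top_right (coe_mem_smul_top hd) _)
  · rw [mul_add]; exact add_mem hx hx'

variable (hσ : ∀ a ∈ I, E.σ₁₁ a ∈ I ∧ E.σ₁₂ a ∈ I ∧ E.σ₂₁ a ∈ I ∧ E.σ₂₂ a ∈ I)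
  (hδ : ∀ a ∈ I, E.δ₁ a ∈ I ∧ E.δ₂ a ∈ I)
include hσ hδ

theorem mul_mem_smul_top_left (c : B) {x : B} (hx : x ∈ (I • ⊤ : Submodule A B)) :
    c * x ∈ (I • ⊤ : Submodule A B) := by
  have hpow {y : B} (hy : ∀ x ∈ (I • ⊤ : Submodule A B), y * x ∈ (I • ⊤ : Submodule A B))
      (n : ℕ) : ∀ x ∈ (I • ⊤ : Submodule A B), y ^ n * x ∈ (I • ⊤ : Submodule A B) := by
    induction n with
    | zero => simp
    | succ n ih => intro x hx; rw [pow_succ', mul_assoc]; exact hy _ (ih x hx)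
  have hy₁ := hpow fun x => E.mul_mem_smul_top_of_mul_coe_eq E.R2₁
    (fun a ha => ⟨(hσ a ha).1, (hσ a ha).2.1, (hδ a ha).1⟩)
  have hy₂ := hpow fun x => E.mul_mem_smul_top_of_mul_coe_eq E.R2₂
    (fun a ha => ⟨(hσ a ha).2.2.1, (hσ a ha).2.2.2, (hδ a ha).2⟩)
  induction E.span_monomial (mem_top : c ∈ ⊤) using span_induction with
  | mem _ h =>
    obtain ⟨q, rfl⟩ := h
    rw [monomial, mul_assoc]
    exact hy₁ q.1 _ (hy₂ q.2 x hx)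
  | zero => simp
  | add c c' _ _ hc hc' => rw [add_mul]; exact add_mem hc hc'
  | smul a c _ hc => rw [smul_mul_assoc]; exact smul_mem _ a hc

def twoSidedIdeal : TwoSidedIdeal B :=
  .mk' ((I • ⊤ : Submodule A B) : Set B) (zero_mem _) add_mem neg_mem
    (E.mul_mem_smul_top_left hσ hδ _) (mul_mem_smul_top_right · _)

theorem mk_eq_zero_iff {x : B} :
    ((x : (E.twoSidedIdeal hσ hδ).ringCon.Quotient) = 0) ↔ x ∈ (I • ⊤ : Submodule A B) := by
  rw [← RingCon.coe_zero, RingCon.eq, TwoSidedIdeal.rel_iff, sub_zero, twoSidedIdeal,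
    TwoSidedIdeal.mem_mk', SetLike.mem_coe]

end Ideal

section Residue

variable (ε : A →ₐ[k] k)
  (hσ : ∀ a ∈ RingHom.ker ε, E.σ₁₁ a ∈ RingHom.ker ε ∧ E.σ₁₂ a ∈ RingHom.ker ε ∧
    E.σ₂₁ a ∈ RingHom.ker ε ∧ E.σ₂₂ a ∈ RingHom.ker ε)
  (hδ : ∀ a ∈ RingHom.ker ε, E.δ₁ a ∈ RingHom.ker ε ∧ E.δ₂ a ∈ RingHom.ker ε)

abbrev Residue : Type _ := (E.twoSidedIdeal hσ hδ).ringCon.Quotient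

theorem mk_coe_eq_algebraMap (a : A) :
    ((a : B) : E.Residue ε hσ hδ) = algebraMap k _ (ε a) := by
  have h : (a : B) - algebraMap k B (ε a) = ((a - algebraMap k A (ε a) : A) : B) := by simp
  rw [← RingCon.coe_algebraMap, RingCon.eq, TwoSidedIdeal.rel_iff, twoSidedIdeal,
    TwoSidedIdeal.mem_mk', SetLike.mem_coe, h]
  exact coe_mem_smul_top (by simp)

theorem linearIndependent_mk_monomial :
    LinearIndependent k fun q => (E.monomial q : E.Residue ε hσ hδ) := by
  refine linearIndependent_iff.2 fun l hl => Finsupp.ext fun q => ?_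
  have hmem := (E.mk_eq_zero_iff hσ hδ).1 <| (Finsupp.apply_linearCombination k
    (RingCon.mkₐ k (E.twoSidedIdeal hσ hδ).ringCon).toLinearMap E.monomial l).trans hl
  have := E.monomialBasis.repr_apply_mem_of_mem_smul_top hmem q
  have hsmul (c : k) (i : ℕ × ℕ) :
      E.monomialBasis.repr (c • E.monomial i) = c • Finsupp.single i 1 := by
    rw [← algebraMap_smul A c, map_smul, monomialBasis_repr_monomial, algebraMap_smul]
  simp only [Finsupp.linearCombination_apply, Finsupp.sum, map_sum, hsmul,
    Finsupp.coe_finsetSum, Finset.sum_apply, Finsupp.smul_apply, Finsupp.single_apply, smul_ite,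
    smul_zero, Finset.sum_ite_eq', Finsupp.mem_support_iff] at this
  split_ifs at this with hq
  · simpa using this
  · simpa using hq

theorem span_mk_monomial :
    ⊤ ≤ span k (range fun q => (E.monomial q : E.Residue ε hσ hδ)) := by
  rintro y -
  obtain ⟨x, rfl⟩ := RingCon.mk'_surjective (E.twoSidedIdeal hσ hδ).ringCon y
  rw [← E.monomialBasis.linearCombination_repr x, Finsupp.linearCombination_apply,
    Finsupp.sum, map_sum]
  refine sum_mem fun q _ => ?_
  rw [RingCon.coe_mk', Subalgebra.smul_def, smul_eq_mul, RingCon.coe_mul, mk_coe_eq_algebraMap,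
    ← Algebra.smul_def, monomialBasis, Basis.mk_apply]
  exact smul_mem _ _ (subset_span ⟨q, rfl⟩)

noncomputable def residueBasis : Basis (ℕ × ℕ) k (E.Residue ε hσ hδ) :=
  .mk (E.linearIndependent_mk_monomial ε hσ hδ) (E.span_mk_monomial ε hσ hδ)

theorem residueBasis_apply (q : ℕ × ℕ) : E.residueBasis ε hσ hδ q =
    (E.y₁ : E.Residue ε hσ hδ) ^ q.1 * (E.y₂ : E.Residue ε hσ hδ) ^ q.2 := by
  simp [residueBasis, monomial]

theorem mk_y₂_mul_mk_y₁
    (hτ : E.τ₁ ∈ RingHom.ker ε ∧ E.τ₂ ∈ RingHom.ker ε ∧ E.τ₀ ∈ RingHom.ker ε) (hp : E.p₁₂ = 0) :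
    (E.y₂ : E.Residue ε hσ hδ) * E.y₁ = E.p₁₁ • ((E.y₁ : E.Residue ε hσ hδ) * E.y₁) := by
  obtain ⟨h₁, h₂, h₀⟩ := hτ
  rw [← RingCon.coe_mul, E.R1, hp]
  simp [mk_coe_eq_algebraMap, RingHom.mem_ker.1 h₁, RingHom.mem_ker.1 h₂,
    RingHom.mem_ker.1 h₀]

end Residue

end RightDoubleExtension

/-- If a right double extension `B` admits a `σ`-, `δ`-stable codimension-1 ideal
`m = ker ε` of `A` containing the tail `τ`, and `B` is left or right noetherian,
then `p₁₂ ≠ 0`. -/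
theorem p12_ne_zero_of_noetherian
    {k : Type*} [Field k] {B : Type*} [Ring B] [Algebra k B]
    {A : Subalgebra k B} (E : RightDoubleExtension k A)
    (ε : A →ₐ[k] k)
    (hσ : ∀ a ∈ RingHom.ker ε, E.σ₁₁ a ∈ RingHom.ker ε ∧ E.σ₁₂ a ∈ RingHom.ker ε ∧
        E.σ₂₁ a ∈ RingHom.ker ε ∧ E.σ₂₂ a ∈ RingHom.ker ε)
    (hδ : ∀ a ∈ RingHom.ker ε, E.δ₁ a ∈ RingHom.ker ε ∧ E.δ₂ a ∈ RingHom.ker ε)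
    (hτ : E.τ₁ ∈ RingHom.ker ε ∧ E.τ₂ ∈ RingHom.ker ε ∧ E.τ₀ ∈ RingHom.ker ε)
    (hnoeth : IsNoetherianRing B ∨ IsNoetherianRing Bᵐᵒᵖ) :
    E.p₁₂ ≠ 0 := by
  intro hp
  let c := (E.twoSidedIdeal hσ hδ).ringCon
  have hsurj : Function.Surjective (c.mk' : B →+* c.Quotient) := RingCon.mk'_surjective c
  have hrel := E.mk_y₂_mul_mk_y₁ ε hσ hδ hτ hp
  have hb := E.residueBasis_apply ε hσ hδ
  rcases hnoeth with hB | hB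
  · exact not_isNoetherianRing_of_basis _ hb hrel
      (isNoetherianRing_of_surjective B _ c.mk' hsurj)
  · exact not_isNoetherianRing_mulOpposite_of_basis _ hb hrel
      (isNoetherianRing_of_surjective Bᵐᵒᵖ _ (RingHom.op c.mk')
        (op_surjective.comp (hsurj.comp unop_surjective)))
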